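/- arXiv:0809.3097 — 2 statements merged into one kernel-verified Lean document; each statement's English description precedes it below -/
import Mathlib

section
/- Properties of the twisted Haar functions. Let μ be a Borel measure on ℝ^N finite on cubes, Q an axis-parallel cube with dyadic children enumerated Q_1,…,Q_{2^N}, and set Q̂_k := ∪_{j=k}^{2^N} Q_j. Let b be a measurable function with ‖b‖_{L^∞(μ)} ≤ 1, and write b(A) := ∫_A b dμ, for some δ > 0 assume μ(Q_u) > 0, |b(Q_u)| ≥ δ μ(Q_u), and |b(Q̂_u)| ≥ 2^{−N} δ μ(Q) and |b(Q̂_{u+1})| ≥ 2^{−N} δ μ(Q), where 1 ≤ u ≤ 2^N − 1 is fixed. Define φ := c·(1_{Q_u}/b(Q_u) − 1_{Q̂_{u+1}}/b(Q̂_{u+1})) where c is any complex square root of b(Q_u)·b(Q̂_{u+1})/b(Q̂_u). Then: (i) ∫ b φ dμ = 0; (ii) there exist constants 0 < c₁ ≤ c₂ < ∞ depending only on δ and N such that c₁ √(μ(Q_u)) (1_{Q_u}/μ(Q_u) + 1_{Q̂_{u+1}}/μ(Q)) ≤ |φ| ≤ c₂ √(μ(Q_u)) (1_{Q_u}/μ(Q_u)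 + 1_{Q̂_{u+1}}/μ(Q)) pointwise; (iii) for every p ∈ [1,∞], c₁' μ(Q_u)^{1/p−1/2} ≤ ‖φ‖_{L^p(μ)} ≤ c₂' μ(Q_u)^{1/p−1/2} with c₁', c₂' depending only on δ and N; and (iv) ‖φ‖_{L¹(μ)}·‖φ‖_{L^∞(μ)} ≤ C(δ,N). -/
open MeasureTheory ENNReal

noncomputable section

/-- Euclidean space `ℝ^N`. -/
abbrev RN (N : ℕ) := EuclideanSpace ℝ (Fin N)

/-- The axis-parallel (half-open) cube with centre `c` and side-length `l`. -/
def cube {N : ℕ} (c : RN N) (l : ℝ) : Set (RN N) :=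
  {x | ∀ i, c i - l / 2 ≤ x i ∧ x i < c i + l / 2}

/-- The dyadic child of the cube with centre `c` and side-length `l` selected by
`s : Fin N → Bool`. -/
def childCube {N : ℕ} (c : RN N) (l : ℝ) (s : Fin N → Bool) : Set (RN N) :=
  cube (WithLp.toLp 2 (fun i => c i + (if s i then l / 4 else -(l / 4)) : Fin N → ℝ)) (l / 2)

/-- `Q̂_k = ∪_{j≥k} Q_j`: the union of the children with index at least `k` in the
enumeration `e` (zero-based). -/
def unionFrom {N : ℕ} (c : RN N) (l : ℝ) (e : Fin (2 ^ N) → (Fin N → Bool))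
    (k : ℕ) : Set (RN N) :=
  ⋃ j ∈ {j : Fin (2 ^ N) | k ≤ (j : ℕ)}, childCube c l (e j)

/-! Since `Q_u` and `Q̂_{u+1}` are disjoint, `φ` equals `c / b(Q_u)` on `Q_u`, `-c / b(Q̂_{u+1})`
on `Q̂_{u+1}` and vanishes elsewhere, so `∫ b φ = c - c = 0`. The hypotheses together with
`|b(S)| ≤ μ(S)` pin `|b(Q_u)|` to `μ(Q_u)` and `|b(Q̂_u)|`, `|b(Q̂_{u+1})|` to `μ(Q)` up to factors
depending only on `δ` and `N`; hence `|c|² ≍ μ(Q_u)`, which is the pointwise bound (ii). Integrating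
(ii), the part on `Q_u` has `L^p` norm `≍ μ(Q_u)^{1/p - 1/2}`, and the part on `Q̂_{u+1}` is no
larger since `μ(Q̂_{u+1}) ≤ μ(Q)`, `μ(Q_u) ≤ μ(Q)` and `1/p - 1 ≤ 0`. The cases `p = 1` and
`p = ∞` multiply to (iv). -/

lemma measurableSet_cube {N : ℕ} (c : RN N) (l : ℝ) : MeasurableSet (cube c l) := by
  have h : cube c l = ⋂ i, (fun x : RN N => x i) ⁻¹' Set.Ico (c i - l / 2) (c i + l / 2) := by
    ext x; simp [cube, Set.mem_Ico]
  rw [h]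
  exact MeasurableSet.iInter fun i => measurableSet_Ico.preimage (by fun_prop)

lemma measurableSet_unionFrom {N : ℕ} (c : RN N) (l : ℝ) (e : Fin (2 ^ N) → (Fin N → Bool))
    (k : ℕ) : MeasurableSet (unionFrom c l e k) :=
  .biUnion (Set.to_countable _) fun _ _ => measurableSet_cube _ _

lemma childCube_subset_cube {N : ℕ} (c : RN N) {l : ℝ} (hl : 0 < l) (s : Fin N → Bool) :
    childCube c l s ⊆ cube c l := by
  intro x hx i
  have h := hx i
  dsimp only at h
  cases hsi : s i <;> simp only [hsi, Bool.false_eq_true, if_false, if_true] at h <;>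
    constructor <;> linarith [h.1, h.2]

lemma unionFrom_subset_cube {N : ℕ} (c : RN N) {l : ℝ} (hl : 0 < l)
    (e : Fin (2 ^ N) → (Fin N → Bool)) (k : ℕ) : unionFrom c l e k ⊆ cube c l :=
  Set.iUnion₂_subset fun _ _ => childCube_subset_cube c hl _

lemma disjoint_childCube {N : ℕ} (c : RN N) (l : ℝ) {s t : Fin N → Bool} (hst : s ≠ t) :
    Disjoint (childCube c l s) (childCube c l t) := by
  obtain ⟨i, hi⟩ := Function.ne_iff.mp hst
  refine Set.disjoint_left.mpr fun x hs ht => ?_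
  have h1 := hs i
  have h2 := ht i
  dsimp only at h1 h2
  cases hsi : s i <;> cases hti : t i <;>
    simp only [hsi, hti, ne_eq, not_true_eq_false] at hi h1 h2
  all_goals norm_num at h1 h2; linarith [h1.1, h1.2, h2.1, h2.2]

lemma disjoint_childCube_unionFrom_succ {N : ℕ} (c : RN N) (l : ℝ)
    {e : Fin (2 ^ N) → (Fin N → Bool)} (he : Function.Injective e) (u : Fin (2 ^ N)) :
    Disjoint (childCube c l (e u)) (unionFrom c l e ((u : ℕ) + 1)) :=
  Set.disjoint_iUnion₂_right.mpr fun _ hj =>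
    disjoint_childCube c l (he.ne (Fin.ne_of_lt (Nat.lt_of_succ_le hj)))

section

variable {α : Type*}

def twistedHaar (c β γ : ℂ) (A B : Set α) (x : α) : ℂ :=
  c * (A.indicator (fun _ => (1 : ℂ)) x * β⁻¹ - B.indicator (fun _ => (1 : ℂ)) x * γ⁻¹)

lemma norm_twistedHaar {A B : Set α} (hAB : Disjoint A B) (c β γ : ℂ) (x : α) :
    ‖twistedHaar c β γ A B x‖ =
      A.indicator (fun _ => ‖c‖ / ‖β‖) x + B.indicator (fun _ => ‖c‖ / ‖γ‖) x := by
  by_cases hxA : x ∈ A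
  · have hxB : x ∉ B := Set.disjoint_left.mp hAB hxA
    simp [twistedHaar, hxA, hxB, div_eq_mul_inv]
  · by_cases hxB : x ∈ B
    · simp [twistedHaar, hxA, hxB, div_eq_mul_inv]
    · simp [twistedHaar, hxA, hxB]

def haarProfile (m M : ℝ) (A B : Set α) (x : α) : ℝ :=
  A.indicator (fun _ => m⁻¹) x + B.indicator (fun _ => M⁻¹) x

lemma haarProfile_nonneg {m M : ℝ} (hm : 0 ≤ m) (hM : 0 ≤ M) (A B : Set α) :
    0 ≤ haarProfile m M A B := fun x =>
  add_nonneg (Set.indicator_nonneg (fun _ _ => by positivity) x)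
    (Set.indicator_nonneg (fun _ _ => by positivity) x)

variable {δ K m M : ℝ} {c β γ γ₁ : ℂ}

lemma norm_bounds_of_sq_eq_mul_div (hδ : 0 < δ) (hK : 1 ≤ K) (hm : 0 < m) (hM : 0 < M)
    (hβ : δ * m ≤ ‖β‖) (hβm : ‖β‖ ≤ m) (hγ : K⁻¹ * δ * M ≤ ‖γ‖) (hγM : ‖γ‖ ≤ M)
    (hγ₁ : K⁻¹ * δ * M ≤ ‖γ₁‖) (hγ₁M : ‖γ₁‖ ≤ M) (hc : c ^ 2 = β * γ₁ / γ) :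
    δ / K * √m ≤ ‖c‖ ∧ ‖c‖ ≤ K / δ * √m := by
  have hnorm : ‖c‖ ^ 2 = ‖β‖ * ‖γ₁‖ / ‖γ‖ := by rw [← norm_pow, hc, norm_div, norm_mul]
  have hγ0 : 0 < ‖γ‖ := lt_of_lt_of_le (by positivity) hγ
  have hγ₁0 : 0 < ‖γ₁‖ := lt_of_lt_of_le (by positivity) hγ₁
  have hδK : 1 ≤ K / δ := by
    have hδ1 : δ ≤ 1 := le_of_mul_le_mul_right (by linarith) hm
    exact (one_le_div hδ).2 (hδ1.trans hK)
  constructor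
  · refine (pow_le_pow_iff_left₀ (by positivity) (norm_nonneg c) two_ne_zero).1 ?_
    calc (δ / K * √m) ^ 2 = δ ^ 2 * m / K ^ 2 := by
          rw [mul_pow, Real.sq_sqrt hm.le]; ring
      _ ≤ δ ^ 2 * m / K := by gcongr; exact le_self_pow₀ hK two_ne_zero
      _ = δ * m * (K⁻¹ * δ * M) / M := by field_simp
      _ ≤ ‖c‖ ^ 2 := by
          rw [hnorm]
          exact div_le_div₀ (by positivity) (mul_le_mul hβ hγ₁ (by positivity) (norm_nonneg _))
            hγ0 hγM
  · refine (pow_le_pow_iff_left₀ (norm_nonneg c) (by positivity) two_ne_zero).1 ?_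
    calc ‖c‖ ^ 2 ≤ m * M / (K⁻¹ * δ * M) := by
          rw [hnorm]
          exact div_le_div₀ (by positivity) (mul_le_mul hβm hγ₁M hγ₁0.le hm.le)
            (by positivity) hγ
      _ = K / δ * m := by field_simp
      _ ≤ (K / δ) ^ 2 * m := by gcongr; exact le_self_pow₀ hδK two_ne_zero
      _ = (K / δ * √m) ^ 2 := by rw [mul_pow, Real.sq_sqrt hm.le]

lemma norm_twistedHaar_comparable {A B : Set α} (hAB : Disjoint A B) (hδ : 0 < δ)
    (hK : 1 ≤ K) (hm : 0 < m) (hM : 0 < M)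
    (hβ : δ * m ≤ ‖β‖) (hβm : ‖β‖ ≤ m) (hγ : K⁻¹ * δ * M ≤ ‖γ‖) (hγM : ‖γ‖ ≤ M)
    (hγ₁ : K⁻¹ * δ * M ≤ ‖γ₁‖) (hγ₁M : ‖γ₁‖ ≤ M) (hc : c ^ 2 = β * γ₁ / γ) (x : α) :
    δ / K * √m * haarProfile m M A B x ≤ ‖twistedHaar c β γ₁ A B x‖ ∧
      ‖twistedHaar c β γ₁ A B x‖ ≤ (K / δ) ^ 2 * √m * haarProfile m M A B x := by
  obtain ⟨hc_lo, hc_hi⟩ := norm_bounds_of_sq_eq_mul_div hδ hK hm hM hβ hβm hγ hγM hγ₁ hγ₁M hc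
  have hβ0 : 0 < ‖β‖ := lt_of_lt_of_le (by positivity) hβ
  have hγ₁0 : 0 < ‖γ₁‖ := lt_of_lt_of_le (by positivity) hγ₁
  have hA_lo : δ / K * √m * m⁻¹ ≤ ‖c‖ / ‖β‖ :=
    mul_le_mul hc_lo (inv_anti₀ hβ0 hβm) (by positivity) (norm_nonneg _)
  have hB_lo : δ / K * √m * M⁻¹ ≤ ‖c‖ / ‖γ₁‖ :=
    mul_le_mul hc_lo (inv_anti₀ hγ₁0 hγ₁M) (by positivity) (norm_nonneg _)
  have hA_hi : ‖c‖ / ‖β‖ ≤ (K / δ) ^ 2 * √m * m⁻¹ :=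
    calc ‖c‖ / ‖β‖ ≤ K / δ * √m / (δ * m) := div_le_div₀ (by positivity) hc_hi (by positivity) hβ
      _ = K / δ ^ 2 * √m * m⁻¹ := by field_simp
      _ ≤ (K / δ) ^ 2 * √m * m⁻¹ := by
          rw [div_pow]; gcongr; exact le_self_pow₀ hK two_ne_zero
  have hB_hi : ‖c‖ / ‖γ₁‖ ≤ (K / δ) ^ 2 * √m * M⁻¹ :=
    calc ‖c‖ / ‖γ₁‖ ≤ K / δ * √m / (K⁻¹ * δ * M) :=
          div_le_div₀ (by positivity) hc_hi (by positivity) hγ₁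
      _ = (K / δ) ^ 2 * √m * M⁻¹ := by field_simp
  have hmul (S : Set α) (a v : ℝ) :
      a * S.indicator (fun _ => v) x = S.indicator (fun _ => a * v) x :=
    (Set.indicator_const_mul S (fun _ => v) a x).symm
  rw [norm_twistedHaar hAB, haarProfile, mul_add, hmul, hmul, mul_add, hmul, hmul]
  exact ⟨add_le_add (Set.indicator_le_indicator hA_lo) (Set.indicator_le_indicator hB_lo),
    add_le_add (Set.indicator_le_indicator hA_hi) (Set.indicator_le_indicator hB_hi)⟩

end

section

variable {α : Type*} [MeasurableSpace α] {μ : Measure α}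

lemma norm_setIntegral_le_measureReal {E : Type*} [NormedAddCommGroup E] [NormedSpace ℝ E]
    {b : α → E} (hb : ∀ᵐ x ∂μ, ‖b x‖ ≤ 1) {s : Set α} (hs : μ s < ∞) :
    ‖∫ x in s, b x ∂μ‖ ≤ μ.real s := by
  simpa using norm_setIntegral_le_of_norm_le_const_ae hs (ae_restrict_of_ae hb)

lemma integral_mul_twistedHaar_eq_zero {b : α → ℂ} {A B : Set α} (hA : MeasurableSet A)
    (hB : MeasurableSet B) (hbA : IntegrableOn b A μ) (hbB : IntegrableOn b B μ) (c : ℂ)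
    {β γ : ℂ} (hβ : ∫ x in A, b x ∂μ = β) (hγ : ∫ x in B, b x ∂μ = γ) (hβ0 : β ≠ 0)
    (hγ0 : γ ≠ 0) :
    ∫ x, b x * twistedHaar c β γ A B x ∂μ = 0 := by
  have hsplit : (fun x => b x * twistedHaar c β γ A B x) =
      fun x => c * β⁻¹ * A.indicator b x - c * γ⁻¹ * B.indicator b x := by
    ext x
    simp only [twistedHaar, Set.indicator]
    split_ifs <;> ring
  rw [hsplit, integral_sub ((hbA.integrable_indicator hA).const_mul _)
    ((hbB.integrable_indicator hB).const_mul _), integral_const_mul, integral_const_mul,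
    integral_indicator hA, integral_indicator hB, hβ, hγ, inv_mul_cancel_right₀ hβ0,
    inv_mul_cancel_right₀ hγ0, sub_self]

section

variable {s : Set α} {a : ℝ}

lemma eLpNorm_indicator_const_eq_ofReal (hs : MeasurableSet s) (hμ0 : μ s ≠ 0)
    (hμ : μ s ≠ ∞) (ha : 0 ≤ a) {p : ℝ≥0∞} (hp : p ≠ 0) :
    eLpNorm (s.indicator fun _ => a) p μ = ENNReal.ofReal (a * μ.real s ^ (1 / p).toReal) := by
  rw [eLpNorm_indicator_const' hs hμ0 hp, ENNReal.toReal_div, toReal_one,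
    Real.enorm_eq_ofReal ha, ENNReal.ofReal_mul ha,
    ← ENNReal.ofReal_rpow_of_nonneg measureReal_nonneg (by positivity), ofReal_measureReal hμ]

lemma eLpNorm_indicator_const_le_ofReal (hμ : μ s ≠ ∞) (ha : 0 ≤ a) (p : ℝ≥0∞) :
    eLpNorm (s.indicator fun _ => a) p μ ≤ ENNReal.ofReal (a * μ.real s ^ (1 / p).toReal) := by
  refine (eLpNorm_indicator_const_le a p).trans_eq ?_
  rw [ENNReal.toReal_div, toReal_one, Real.enorm_eq_ofReal ha, ENNReal.ofReal_mul ha,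
    ← ENNReal.ofReal_rpow_of_nonneg measureReal_nonneg (by positivity), ofReal_measureReal hμ]

end

section

variable {A B : Set α} {M : ℝ} {p : ℝ≥0∞}

lemma le_eLpNorm_haarProfile (hA : MeasurableSet A) (hA0 : μ A ≠ 0) (hAfin : μ A ≠ ∞)
    (hM : 0 ≤ M) (hp : p ≠ 0) :
    ENNReal.ofReal (μ.real A ^ ((1 / p).toReal - 1)) ≤
      eLpNorm (haarProfile (μ.real A) M A B) p μ := by
  have hm : 0 < μ.real A := ENNReal.toReal_pos hA0 hAfin
  calc ENNReal.ofReal (μ.real A ^ ((1 / p).toReal - 1))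
      = eLpNorm (A.indicator fun _ => (μ.real A)⁻¹) p μ := by
        rw [eLpNorm_indicator_const_eq_ofReal hA hA0 hAfin (by positivity) hp,
          Real.rpow_sub_one hm.ne', inv_mul_eq_div]
    _ ≤ eLpNorm (haarProfile (μ.real A) M A B) p μ := by
        refine eLpNorm_mono_real fun x => ?_
        rw [Real.norm_of_nonneg (Set.indicator_nonneg (fun _ _ => by positivity) x)]
        exact le_add_of_nonneg_right (Set.indicator_nonneg (fun _ _ => by positivity) x)

lemma eLpNorm_haarProfile_le (hA : MeasurableSet A) (hB : MeasurableSet B) (hAfin : μ A ≠ ∞)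
    (hBfin : μ B ≠ ∞) (hm : 0 < μ.real A) (hAM : μ.real A ≤ M) (hBM : μ.real B ≤ M)
    (hp : 1 ≤ p) :
    eLpNorm (haarProfile (μ.real A) M A B) p μ ≤
      ENNReal.ofReal (2 * μ.real A ^ ((1 / p).toReal - 1)) := by
  set r := (1 / p).toReal
  have hr1 : r ≤ 1 := by
    have : 1 / p ≤ 1 := by rw [one_div]; exact ENNReal.inv_le_one.2 hp
    exact (ENNReal.toReal_mono one_ne_top this).trans_eq toReal_one
  have hM : 0 < M := hm.trans_le hAM
  have hBterm : M⁻¹ * μ.real B ^ r ≤ μ.real A ^ (r - 1) :=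
    calc M⁻¹ * μ.real B ^ r ≤ M⁻¹ * M ^ r := by gcongr
      _ = M ^ (r - 1) := by rw [Real.rpow_sub_one hM.ne', inv_mul_eq_div]
      _ ≤ μ.real A ^ (r - 1) := Real.rpow_le_rpow_of_nonpos hm hAM (by linarith)
  calc eLpNorm (haarProfile (μ.real A) M A B) p μ
      ≤ eLpNorm (A.indicator fun _ => (μ.real A)⁻¹) p μ
          + eLpNorm (B.indicator fun _ => M⁻¹) p μ :=
        eLpNorm_add_le (aestronglyMeasurable_const.indicator hA)
          (aestronglyMeasurable_const.indicator hB) hp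
    _ ≤ ENNReal.ofReal ((μ.real A)⁻¹ * μ.real A ^ r) + ENNReal.ofReal (M⁻¹ * μ.real B ^ r) :=
        add_le_add (eLpNorm_indicator_const_le_ofReal hAfin (by positivity) p)
          (eLpNorm_indicator_const_le_ofReal hBfin (by positivity) p)
    _ ≤ ENNReal.ofReal (μ.real A ^ (r - 1)) + ENNReal.ofReal (μ.real A ^ (r - 1)) := by
        rw [inv_mul_eq_div, ← Real.rpow_sub_one hm.ne']
        gcongr
    _ = ENNReal.ofReal (2 * μ.real A ^ (r - 1)) := by
        rw [← ENNReal.ofReal_add (by positivity) (by positivity), two_mul]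

end

section

variable {E : Type*} [NormedAddCommGroup E] {f : α → E}

lemma eLpNorm_bounds_of_norm_bounds {g : α → ℝ} (hg : 0 ≤ g) {a b : ℝ} (ha : 0 ≤ a)
    (hf : ∀ x, a * g x ≤ ‖f x‖ ∧ ‖f x‖ ≤ b * g x) (p : ℝ≥0∞) :
    ENNReal.ofReal a * eLpNorm g p μ ≤ eLpNorm f p μ ∧
      eLpNorm f p μ ≤ ENNReal.ofReal b * eLpNorm g p μ := by
  constructor
  · calc ENNReal.ofReal a * eLpNorm g p μ = eLpNorm (a • g) p μ := by
          rw [eLpNorm_const_smul, Real.enorm_eq_ofReal ha]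
      _ ≤ eLpNorm f p μ := eLpNorm_mono fun x => by
          rw [Pi.smul_apply, smul_eq_mul, Real.norm_of_nonneg (mul_nonneg ha (hg x))]
          exact (hf x).1
  · refine eLpNorm_le_mul_eLpNorm_of_ae_le_mul (Filter.Eventually.of_forall fun x => ?_) p
    rw [Real.norm_of_nonneg (hg x)]
    exact (hf x).2

lemma eLpNorm_bounds_of_norm_bounds_haarProfile {A B : Set α} {M c₁ c₂ : ℝ}
    (hA : MeasurableSet A) (hB : MeasurableSet B) (hA0 : μ A ≠ 0) (hAfin : μ A ≠ ∞)
    (hBfin : μ B ≠ ∞) (hAM : μ.real A ≤ M) (hBM : μ.real B ≤ M) (hc₁ : 0 ≤ c₁)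
    (hf : ∀ x, c₁ * √(μ.real A) * haarProfile (μ.real A) M A B x ≤ ‖f x‖ ∧
      ‖f x‖ ≤ c₂ * √(μ.real A) * haarProfile (μ.real A) M A B x)
    {p : ℝ≥0∞} (hp : 1 ≤ p) :
    ENNReal.ofReal (c₁ * μ.real A ^ ((1 / p).toReal - 2⁻¹)) ≤ eLpNorm f p μ ∧
      eLpNorm f p μ ≤ ENNReal.ofReal (2 * c₂ * μ.real A ^ ((1 / p).toReal - 2⁻¹)) := by
  have hm : 0 < μ.real A := ENNReal.toReal_pos hA0 hAfin
  have hsqrt (k : ℝ) : k * √(μ.real A) * μ.real A ^ ((1 / p).toReal - 1) =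
      k * μ.real A ^ ((1 / p).toReal - 2⁻¹) := by
    rw [Real.sqrt_eq_rpow, mul_assoc, ← Real.rpow_add hm]
    ring_nf
  obtain ⟨hlo, hhi⟩ := eLpNorm_bounds_of_norm_bounds (μ := μ)
    (haarProfile_nonneg hm.le (hm.le.trans hAM) A B) (by positivity) hf p
  have hP_lo := le_eLpNorm_haarProfile (B := B) hA hA0 hAfin (hm.le.trans hAM)
    (zero_lt_one.trans_le hp).ne'
  have hP_hi := eLpNorm_haarProfile_le hA hB hAfin hBfin hm hAM hBM hp
  constructor
  · calc ENNReal.ofReal (c₁ * μ.real A ^ ((1 / p).toReal - 2⁻¹))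
        = ENNReal.ofReal (c₁ * √(μ.real A)) *
            ENNReal.ofReal (μ.real A ^ ((1 / p).toReal - 1)) := by
          rw [← ENNReal.ofReal_mul (by positivity), hsqrt]
      _ ≤ ENNReal.ofReal (c₁ * √(μ.real A)) * eLpNorm (haarProfile (μ.real A) M A B) p μ := by
          gcongr
      _ ≤ eLpNorm f p μ := hlo
  · calc eLpNorm f p μ
        ≤ ENNReal.ofReal (c₂ * √(μ.real A)) * eLpNorm (haarProfile (μ.real A) M A B) p μ := hhi
      _ ≤ ENNReal.ofReal (c₂ * √(μ.real A)) *
            ENNReal.ofReal (2 * μ.real A ^ ((1 / p).toReal - 1)) := by gcongr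
      _ = ENNReal.ofReal (2 * c₂ * μ.real A ^ ((1 / p).toReal - 2⁻¹)) := by
          rw [← ENNReal.ofReal_mul' (by positivity), ← hsqrt]
          ring_nf

lemma eLpNorm_one_mul_eLpNorm_top_le {m C : ℝ} (hm : 0 < m) (hC : 0 ≤ C)
    (hf : ∀ p : ℝ≥0∞, 1 ≤ p → eLpNorm f p μ ≤ ENNReal.ofReal (C * m ^ ((1 / p).toReal - 2⁻¹))) :
    eLpNorm f 1 μ * eLpNorm f ∞ μ ≤ ENNReal.ofReal (C ^ 2) :=
  calc eLpNorm f 1 μ * eLpNorm f ∞ μ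
      ≤ ENNReal.ofReal (C * m ^ ((1 : ℝ) - 2⁻¹)) * ENNReal.ofReal (C * m ^ ((0 : ℝ) - 2⁻¹)) :=
        mul_le_mul' (by simpa using hf 1 le_rfl) (by simpa using hf ∞ le_top)
    _ = ENNReal.ofReal (C ^ 2) := by
        rw [← ENNReal.ofReal_mul (by positivity), mul_mul_mul_comm, ← Real.rpow_add hm]
        norm_num [sq]

end

theorem twistedHaar_properties {Q A B B' : Set α} {b : α → ℂ} {δ K c₂ : ℝ} {β γ γ₁ c : ℂ}
    (hQ : μ Q ≠ ∞) (hA : MeasurableSet A) (hB : MeasurableSet B) (hAB : Disjoint A B)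
    (hAQ : A ⊆ Q) (hBQ : B ⊆ Q) (hB'Q : B' ⊆ Q) (hb : ∀ᵐ x ∂μ, ‖b x‖ ≤ 1)
    (hbQ : IntegrableOn b Q μ) (hA0 : 0 < μ A) (hδ : 0 < δ) (hK : 1 ≤ K)
    (hc₂ : (K / δ) ^ 2 ≤ c₂) (hβ : ∫ x in A, b x ∂μ = β) (hγ : ∫ x in B', b x ∂μ = γ)
    (hγ₁ : ∫ x in B, b x ∂μ = γ₁) (hβ_lo : δ * μ.real A ≤ ‖β‖)
    (hγ_lo : K⁻¹ * δ * μ.real Q ≤ ‖γ‖) (hγ₁_lo : K⁻¹ * δ * μ.real Q ≤ ‖γ₁‖)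
    (hc : c ^ 2 = β * γ₁ / γ) :
    ∫ x, b x * twistedHaar c β γ₁ A B x ∂μ = 0 ∧
    (∀ x, δ / K * √(μ.real A) * haarProfile (μ.real A) (μ.real Q) A B x
        ≤ ‖twistedHaar c β γ₁ A B x‖ ∧
      ‖twistedHaar c β γ₁ A B x‖
        ≤ c₂ * √(μ.real A) * haarProfile (μ.real A) (μ.real Q) A B x) ∧
    (∀ p : ℝ≥0∞, 1 ≤ p →
      ENNReal.ofReal (δ / K * μ.real A ^ ((1 / p).toReal - 2⁻¹))
        ≤ eLpNorm (twistedHaar c β γ₁ A B) p μ ∧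
      eLpNorm (twistedHaar c β γ₁ A B) p μ
        ≤ ENNReal.ofReal (2 * c₂ * μ.real A ^ ((1 / p).toReal - 2⁻¹))) ∧
    eLpNorm (twistedHaar c β γ₁ A B) 1 μ * eLpNorm (twistedHaar c β γ₁ A B) ∞ μ
      ≤ ENNReal.ofReal ((2 * c₂) ^ 2) := by
  have hAfin : μ A ≠ ∞ := measure_ne_top_of_subset hAQ hQ
  have hm : 0 < μ.real A := ENNReal.toReal_pos hA0.ne' hAfin
  have hmM : μ.real A ≤ μ.real Q := measureReal_mono hAQ hQ
  have hM : 0 < μ.real Q := hm.trans_le hmM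
  have hint_le {S : Set α} (hSQ : S ⊆ Q) : ‖∫ x in S, b x ∂μ‖ ≤ μ.real S :=
    norm_setIntegral_le_measureReal hb (measure_lt_top_of_subset hSQ hQ)
  have hβ_hi : ‖β‖ ≤ μ.real A := hβ ▸ hint_le hAQ
  have hγ_hi : ‖γ‖ ≤ μ.real Q := (hγ ▸ hint_le hB'Q).trans (measureReal_mono hB'Q hQ)
  have hγ₁_hi : ‖γ₁‖ ≤ μ.real Q := (hγ₁ ▸ hint_le hBQ).trans (measureReal_mono hBQ hQ)
  have hcomp (x : α) : δ / K * √(μ.real A) * haarProfile (μ.real A) (μ.real Q) A B x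
        ≤ ‖twistedHaar c β γ₁ A B x‖ ∧
      ‖twistedHaar c β γ₁ A B x‖ ≤ c₂ * √(μ.real A) * haarProfile (μ.real A) (μ.real Q) A B x := by
    obtain ⟨hlo, hhi⟩ := norm_twistedHaar_comparable hAB hδ hK hm hM hβ_lo hβ_hi hγ_lo hγ_hi
      hγ₁_lo hγ₁_hi hc x
    have := haarProfile_nonneg hm.le hM.le A B x
    exact ⟨hlo, hhi.trans (by gcongr)⟩
  have hLp (p : ℝ≥0∞) (hp : 1 ≤ p) := eLpNorm_bounds_of_norm_bounds_haarProfile hA hB hA0.ne'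
    hAfin (measure_ne_top_of_subset hBQ hQ) hmM (measureReal_mono hBQ hQ) (by positivity) hcomp hp
  have hβ0 : β ≠ 0 := norm_pos_iff.mp ((mul_pos hδ hm).trans_le hβ_lo)
  have hγ₁0 : γ₁ ≠ 0 := norm_pos_iff.mp ((by positivity : 0 < K⁻¹ * δ * μ.real Q).trans_le hγ₁_lo)
  have hc₂0 : 0 ≤ c₂ := (sq_nonneg _).trans hc₂
  exact ⟨integral_mul_twistedHaar_eq_zero hA hB (hbQ.mono_set hAQ) (hbQ.mono_set hBQ) c hβ hγ₁
    hβ0 hγ₁0, hcomp, hLp,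
    eLpNorm_one_mul_eLpNorm_top_le hm (by positivity) fun p hp => (hLp p hp).2⟩

end

theorem twisted_Haar_function_properties_general (N : ℕ) (δ : ℝ) (hδ : 0 < δ) :
    ∃ c₁ c₂ c₁' c₂' C : ℝ, 0 < c₁ ∧ c₁ ≤ c₂ ∧ 0 < c₁' ∧ c₁' ≤ c₂' ∧ 0 < C ∧
      ∀ (μ : Measure (RN N)), (∀ (c : RN N) (l : ℝ), μ (cube c l) < ∞) →
      ∀ (c : RN N) (l : ℝ), 0 < l →
      ∀ e : Fin (2 ^ N) ≃ (Fin N → Bool),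
      ∀ u : Fin (2 ^ N), (u : ℕ) + 1 < 2 ^ N →
      ∀ b : RN N → ℂ, Measurable b → (∀ᵐ x ∂μ, ‖b x‖ ≤ 1) →
        IntegrableOn b (cube c l) μ →
      ∀ Qu Qh Qh1 : Set (RN N),
        Qu = childCube c l (e u) → Qh = unionFrom c l e u →
        Qh1 = unionFrom c l e ((u : ℕ) + 1) →
      ∀ bQu bQh bQh1 : ℂ,
        bQu = ∫ x in Qu, b x ∂μ → bQh = ∫ x in Qh, b x ∂μ → bQh1 = ∫ x in Qh1, b x ∂μ →
        0 < μ Qu →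
        δ * (μ Qu).toReal ≤ ‖bQu‖ →
        ((2 : ℝ) ^ N)⁻¹ * δ * (μ (cube c l)).toReal ≤ ‖bQh‖ →
        ((2 : ℝ) ^ N)⁻¹ * δ * (μ (cube c l)).toReal ≤ ‖bQh1‖ →
      ∀ cc : ℂ, cc ^ 2 = bQu * bQh1 / bQh →
      ∀ φ : RN N → ℂ,
        (φ = fun x => cc * (Qu.indicator (fun _ => (1 : ℂ)) x * bQu⁻¹
          - Qh1.indicator (fun _ => (1 : ℂ)) x * bQh1⁻¹)) →
        -- (i) `∫ b φ dμ = 0`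
        ((∫ x, b x * φ x ∂μ) = 0) ∧
        -- (ii) pointwise two-sided comparison
        (∀ x : RN N,
          c₁ * Real.sqrt (μ Qu).toReal *
              (Qu.indicator (fun _ => ((μ Qu).toReal)⁻¹) x
                + Qh1.indicator (fun _ => ((μ (cube c l)).toReal)⁻¹) x) ≤ ‖φ x‖ ∧
          ‖φ x‖ ≤ c₂ * Real.sqrt (μ Qu).toReal *
              (Qu.indicator (fun _ => ((μ Qu).toReal)⁻¹) x
                + Qh1.indicator (fun _ => ((μ (cube c l)).toReal)⁻¹) x)) ∧
        -- (iii) `‖φ‖_{L^p(μ)} ≍ μ(Q_u)^{1/p − 1/2}` for all `p ∈ [1,∞]`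
        (∀ pp : ℝ≥0∞, 1 ≤ pp →
          ENNReal.ofReal (c₁' * (μ Qu).toReal ^ ((1 / pp).toReal - (2 : ℝ)⁻¹)) ≤
              eLpNorm φ pp μ ∧
            eLpNorm φ pp μ ≤
              ENNReal.ofReal (c₂' * (μ Qu).toReal ^ ((1 / pp).toReal - (2 : ℝ)⁻¹))) ∧
        -- (iv) `‖φ‖_{L¹(μ)} ‖φ‖_{L^∞(μ)} ≤ C(δ,N)`
        eLpNorm φ 1 μ * eLpNorm φ ∞ μ ≤ ENNReal.ofReal C := by
  set K : ℝ := (2 : ℝ) ^ N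
  have hK : 1 ≤ K := one_le_pow₀ (by norm_num)
  -- the hypotheses below force `δ ≤ 1`, but the constants have to be chosen before them
  set c₂ := max (δ / K) ((K / δ) ^ 2)
  have hc₂ : 0 < c₂ := lt_max_of_lt_left (by positivity)
  refine ⟨δ / K, c₂, δ / K, 2 * c₂, (2 * c₂) ^ 2, by positivity, le_max_left _ _, by positivity,
    (le_max_left _ _).trans (le_mul_of_one_le_left hc₂.le one_le_two), by positivity, ?_⟩
  rintro μ hμ c l hl e u - b - hb hbint Qu Qh Qh1 rfl rfl rfl bQu bQh bQh1 hbQu hbQh hbQh1 hQu0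
    hbQu_lo hbQh_lo hbQh1_lo cc hcc φ rfl
  exact twistedHaar_properties (hμ c l).ne (measurableSet_cube _ _)
    (measurableSet_unionFrom c l e (u + 1)) (disjoint_childCube_unionFrom_succ c l e.injective u)
    (childCube_subset_cube c hl (e u)) (unionFrom_subset_cube c hl e (u + 1))
    (unionFrom_subset_cube c hl e u) hb hbint hQu0 hδ hK (le_max_right _ _) hbQu.symm hbQh.symm
    hbQh1.symm hbQu_lo hbQh_lo hbQh1_lo hcc

/-- **Properties of the twisted Haar functions.** -/
theorem twisted_Haar_function_properties (N : ℕ) (hN : 0 < N) (δ : ℝ) (hδ : 0 < δ) :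
    ∃ c₁ c₂ c₁' c₂' C : ℝ, 0 < c₁ ∧ c₁ ≤ c₂ ∧ 0 < c₁' ∧ c₁' ≤ c₂' ∧ 0 < C ∧
      ∀ (μ : Measure (RN N)), (∀ (c : RN N) (l : ℝ), μ (cube c l) < ∞) →
      ∀ (c : RN N) (l : ℝ), 0 < l →
      ∀ e : Fin (2 ^ N) ≃ (Fin N → Bool),
      ∀ u : Fin (2 ^ N), (u : ℕ) + 1 < 2 ^ N →
      ∀ b : RN N → ℂ, Measurable b → (∀ᵐ x ∂μ, ‖b x‖ ≤ 1) →
        IntegrableOn b (cube c l) μ →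
      ∀ Qu Qh Qh1 : Set (RN N),
        Qu = childCube c l (e u) → Qh = unionFrom c l e u →
        Qh1 = unionFrom c l e ((u : ℕ) + 1) →
      ∀ bQu bQh bQh1 : ℂ,
        bQu = ∫ x in Qu, b x ∂μ → bQh = ∫ x in Qh, b x ∂μ → bQh1 = ∫ x in Qh1, b x ∂μ →
        0 < μ Qu →
        δ * (μ Qu).toReal ≤ ‖bQu‖ →
        ((2 : ℝ) ^ N)⁻¹ * δ * (μ (cube c l)).toReal ≤ ‖bQh‖ →
        ((2 : ℝ) ^ N)⁻¹ * δ * (μ (cube c l)).toReal ≤ ‖bQh1‖ →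
      ∀ cc : ℂ, cc ^ 2 = bQu * bQh1 / bQh →
      ∀ φ : RN N → ℂ,
        (φ = fun x => cc * (Qu.indicator (fun _ => (1 : ℂ)) x * bQu⁻¹
          - Qh1.indicator (fun _ => (1 : ℂ)) x * bQh1⁻¹)) →
        -- (i) `∫ b φ dμ = 0`
        ((∫ x, b x * φ x ∂μ) = 0) ∧
        -- (ii) pointwise two-sided comparison
        (∀ x : RN N,
          c₁ * Real.sqrt (μ Qu).toReal *
              (Qu.indicator (fun _ => ((μ Qu).toReal)⁻¹) x
                + Qh1.indicator (fun _ => ((μ (cube c l)).toReal)⁻¹) x) ≤ ‖φ x‖ ∧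
          ‖φ x‖ ≤ c₂ * Real.sqrt (μ Qu).toReal *
              (Qu.indicator (fun _ => ((μ Qu).toReal)⁻¹) x
                + Qh1.indicator (fun _ => ((μ (cube c l)).toReal)⁻¹) x)) ∧
        -- (iii) `‖φ‖_{L^p(μ)} ≍ μ(Q_u)^{1/p − 1/2}` for all `p ∈ [1,∞]`
        (∀ pp : ℝ≥0∞, 1 ≤ pp →
          ENNReal.ofReal (c₁' * (μ Qu).toReal ^ ((1 / pp).toReal - (2 : ℝ)⁻¹)) ≤
              eLpNorm φ pp μ ∧
            eLpNorm φ pp μ ≤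
              ENNReal.ofReal (c₂' * (μ Qu).toReal ^ ((1 / pp).toReal - (2 : ℝ)⁻¹))) ∧
        -- (iv) `‖φ‖_{L¹(μ)} ‖φ‖_{L^∞(μ)} ≤ C(δ,N)`
        eLpNorm φ 1 μ * eLpNorm φ ∞ μ ≤ ENNReal.ofReal C :=
  twisted_Haar_function_properties_general N δ hδ
end
end

section
/- Improved matrix coefficient bound for a good smaller cube. Let μ be a Borel measure on ℝ^N satisfying μ(B(x,r)) ≤ r^d for all balls, let K be a d-dimensional Calderón–Zygmund kernel with exponent α > 0, set γ := α/(2(α+d)), and let b₁, b₂ be measurable with ‖b₁‖_{L^∞(μ)} ≤ 1 and ‖b₂‖_{L^∞(μ)} ≤ 1. Let Q and R be axis-parallel cubes with ℓ(Q) ≤ ℓ(R), 0 < ℓ(Q) ≤ dist(Q,R), and dist(Q,R) ≥ (1/2) ℓ(Q)^γ ℓ(R)^{1−γ} (the quantitative consequence of Q being good relative to R). Let φ ∈ L¹(μ) be supported in Q with ∫ b₁ φ dμ = 0, and let ψ ∈ L¹(μ) be supported in R. Then |∬ ψ(x) b₂(x) K(x,y) b₁(y) φ(y) dμ(y) dμ(x)|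 ≤ C (ℓ(Q)^{α/2} ℓ(R)^{α/2} / D(Q,R)^{d+α}) ‖ψ‖_{L¹(μ)} ‖φ‖_{L¹(μ)}, where D(Q,R) := ℓ(Q) + dist(Q,R) + ℓ(R) is the long distance and C depends only on N, d and α. -/
open MeasureTheory ENNReal

noncomputable section

/-- `μ(B(x,r)) ≤ r^d` for all balls. -/
def HasGrowth {N : ℕ} (μ : Measure (RN N)) (d : ℝ) : Prop :=
  ∀ (x : RN N) (r : ℝ), 0 < r → μ (Metric.ball x r) ≤ ENNReal.ofReal (r ^ d)

/-- A `d`-dimensional Calderón–Zygmund kernel with exponent `α`. -/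
structure IsCZKernel {N : ℕ} (d α : ℝ) (K : RN N → RN N → ℂ) : Prop where
  meas : Measurable (Function.uncurry K)
  bound : ∀ x y : RN N, x ≠ y → ‖K x y‖ ≤ dist x y ^ (-d)
  smooth : ∀ x x' y : RN N, 0 < dist x x' → 2 * dist x x' < dist x y →
    ‖K x y - K x' y‖ + ‖K y x - K y x'‖ ≤ dist x x' ^ α / dist x y ^ (d + α)


/-- The (Euclidean) distance between two sets. -/
def sDist {N : ℕ} (s t : Set (RN N)) : ℝ :=
  sInf {r | ∃ x ∈ s, ∃ y ∈ t, r = dist x y}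

/-!
Since `∫ b₁ φ = 0`, the inner integral equals `∫ (K(x,y) - K(x,c_Q)) b₁(y) φ(y) dμ(y)`, so it
suffices to bound `|K(x,y) - K(x,c_Q)|` uniformly for `x ∈ R`, `y ∈ Q`. With `t = dist(Q,R)` and
`ρ = √N ℓ(Q)` the diameter of `Q`, the size condition (when `t ≤ ρ`) or the smoothness condition
(when `t > ρ`) gives the bound `2 ρ^α / t^{d+α}`. It remains to compare `ℓ(Q)^α / t^{d+α}` with
`ℓ(Q)^{α/2} ℓ(R)^{α/2} / D(Q,R)^{d+α}`: if `t ≥ ℓ(R)` then `D ≤ 3t`, and otherwise `D ≤ 3ℓ(R)` and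
goodness, raised to the power `d + α`, reads `ℓ(Q)^{α/2} ℓ(R)^{d+α/2} ≤ (2t)^{d+α}`.
-/

section LongDistance

lemma rpow_le_rpow_half_mul_rpow_half {x y α : ℝ} (hx : 0 < x) (hxy : x ≤ y) (hα : 0 ≤ α) :
    x ^ α ≤ x ^ (α / 2) * y ^ (α / 2) :=
  calc x ^ α = x ^ (α / 2) * x ^ (α / 2) := by rw [← Real.rpow_add hx]; ring_nf
    _ ≤ x ^ (α / 2) * y ^ (α / 2) := by gcongr

lemma div_rpow_le_rpow_mul_div_rpow {A D m c κ : ℝ} (hA : 0 ≤ A) (hD : 0 < D) (hm : 0 < m)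
    (hDm : D ≤ c * m) (hκ : 0 ≤ κ) : A / m ^ κ ≤ c ^ κ * (A / D ^ κ) := by
  have hc : 0 < c := pos_of_mul_pos_left (hD.trans_le hDm) hm.le
  calc A / m ^ κ = c ^ κ * (A / (c * m) ^ κ) := by
        rw [Real.mul_rpow hc.le hm.le]
        field_simp
    _ ≤ c ^ κ * (A / D ^ κ) := by gcongr

variable {d α lQ lR t : ℝ}

lemma rpow_div_rpow_le_of_good (hd : 0 ≤ d) (hα : 0 < α) (hlQ : 0 < lQ) (hlR : 0 < lR)
    (hgood : 1 / 2 * lQ ^ (α / (2 * (α + d))) * lR ^ (1 - α / (2 * (α + d))) ≤ t) :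
    lQ ^ α / t ^ (d + α) ≤ 2 ^ (d + α) * (lQ ^ (α / 2) * lR ^ (α / 2) / lR ^ (d + α)) := by
  set γ := α / (2 * (α + d))
  have hκ : 0 < d + α := by linarith
  have ht : 0 < t := lt_of_lt_of_le (by positivity) hgood
  have hgoodκ : lQ ^ (α / 2) * lR ^ (d + α / 2) ≤ 2 ^ (d + α) * t ^ (d + α) := by
    have hαd : α + d ≠ 0 := by linarith
    have hγ : γ * (d + α) = α / 2 := by simp only [γ]; field_simp; ring
    have hγ' : (1 - γ) * (d + α) = d + α / 2 := by simp only [γ]; field_simp; ring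
    calc lQ ^ (α / 2) * lR ^ (d + α / 2) = (lQ ^ γ * lR ^ (1 - γ)) ^ (d + α) := by
          rw [Real.mul_rpow (by positivity) (by positivity), ← Real.rpow_mul hlQ.le,
            ← Real.rpow_mul hlR.le, hγ, hγ']
      _ ≤ (2 * t) ^ (d + α) := Real.rpow_le_rpow (by positivity) (by linarith) hκ.le
      _ = 2 ^ (d + α) * t ^ (d + α) := Real.mul_rpow zero_le_two ht.le
  have hsplitQ : lQ ^ α = lQ ^ (α / 2) * lQ ^ (α / 2) := by rw [← Real.rpow_add hlQ]; ring_nf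
  have hsplitR : lR ^ (d + α) = lR ^ (α / 2) * lR ^ (d + α / 2) := by
    rw [← Real.rpow_add hlR]; ring_nf
  rw [mul_div_assoc', le_div_iff₀ (by positivity), div_mul_eq_mul_div,
    div_le_iff₀ (by positivity), hsplitQ, hsplitR]
  calc lQ ^ (α / 2) * lQ ^ (α / 2) * (lR ^ (α / 2) * lR ^ (d + α / 2))
      = lQ ^ (α / 2) * lR ^ (α / 2) * (lQ ^ (α / 2) * lR ^ (d + α / 2)) := by ring
    _ ≤ lQ ^ (α / 2) * lR ^ (α / 2) * (2 ^ (d + α) * t ^ (d + α)) := by gcongr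
    _ = 2 ^ (d + α) * (lQ ^ (α / 2) * lR ^ (α / 2)) * t ^ (d + α) := by ring

lemma rpow_div_rpow_le_longDist (hd : 0 ≤ d) (hα : 0 < α) (hlQ : 0 < lQ) (hlQR : lQ ≤ lR)
    (hlQt : lQ ≤ t)
    (hgood : 1 / 2 * lQ ^ (α / (2 * (α + d))) * lR ^ (1 - α / (2 * (α + d))) ≤ t) :
    lQ ^ α / t ^ (d + α) ≤
      6 ^ (d + α) * (lQ ^ (α / 2) * lR ^ (α / 2) / (lQ + t + lR) ^ (d + α)) := by
  have hlR : 0 < lR := hlQ.trans_le hlQR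
  have ht : 0 < t := hlQ.trans_le hlQt
  have hκ : 0 < d + α := by linarith
  set A := lQ ^ (α / 2) * lR ^ (α / 2)
  obtain ⟨m, hm, hDm, hle⟩ : ∃ m, 0 < m ∧ lQ + t + lR ≤ 3 * m ∧
      lQ ^ α / t ^ (d + α) ≤ 2 ^ (d + α) * (A / m ^ (d + α)) := by
    rcases le_total lR t with hRt | htR
    · refine ⟨t, ht, by linarith, ?_⟩
      calc lQ ^ α / t ^ (d + α) ≤ A / t ^ (d + α) := by
            gcongr; exact rpow_le_rpow_half_mul_rpow_half hlQ hlQR hα.le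
        _ ≤ 2 ^ (d + α) * (A / t ^ (d + α)) :=
            le_mul_of_one_le_left (by positivity) (Real.one_le_rpow one_le_two hκ.le)
    · exact ⟨lR, hlR, by linarith, rpow_div_rpow_le_of_good hd hα hlQ hlR hgood⟩
  calc lQ ^ α / t ^ (d + α)
      ≤ 2 ^ (d + α) * (3 ^ (d + α) * (A / (lQ + t + lR) ^ (d + α))) := by
        refine hle.trans ?_
        gcongr
        exact div_rpow_le_rpow_mul_div_rpow (by positivity) (by positivity) hm hDm hκ.le
    _ = 6 ^ (d + α) * (A / (lQ + t + lR) ^ (d + α)) := by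
        rw [← mul_assoc, ← Real.mul_rpow zero_le_two zero_le_three]
        norm_num

end LongDistance

section Cubes

variable {N : ℕ}

lemma mem_cube_self (c : RN N) {l : ℝ} (hl : 0 < l) : c ∈ cube c l :=
  fun _ ↦ ⟨by linarith, by linarith⟩

lemma two_mul_dist_le_of_mem_cube {c y : RN N} {l : ℝ} (hl : 0 ≤ l) (hy : y ∈ cube c l) :
    2 * dist y c ≤ √N * l := by
  have hcoord : ∀ i, dist (y i) (c i) ≤ l / 2 := fun i ↦ by
    rw [Real.dist_eq, abs_le]
    constructor <;> linarith [hy i]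
  calc 2 * dist y c ≤ 2 * √(∑ _i : Fin N, (l / 2) ^ 2) := by
        rw [EuclideanSpace.dist_eq]
        gcongr with i
        exact hcoord i
    _ = √N * l := by
        rw [Finset.sum_const, Finset.card_univ, Fintype.card_fin, nsmul_eq_mul,
          Real.sqrt_mul (Nat.cast_nonneg N), Real.sqrt_sq (by linarith)]
        ring

lemma sDist_le_dist {s t : Set (RN N)} {x y : RN N} (hx : x ∈ s) (hy : y ∈ t) :
    sDist s t ≤ dist x y :=
  csInf_le ⟨0, fun _ ⟨_, _, _, _, hr⟩ ↦ hr ▸ dist_nonneg⟩ ⟨x, hx, y, hy, rfl⟩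

end Cubes

lemma IsCZKernel.norm_sub_le_of_le_dist {N : ℕ} {d α : ℝ} {K : RN N → RN N → ℂ}
    (hK : IsCZKernel d α K) (hd : 0 ≤ d) (hα : 0 ≤ α) {x y y' : RN N} {t ρ : ℝ} (ht : 0 < t)
    (hy : t ≤ dist y x) (hy' : t ≤ dist y' x) (hyy' : 2 * dist y y' ≤ ρ) :
    ‖K x y - K x y'‖ ≤ 2 * ρ ^ α / t ^ (d + α) := by
  rcases le_or_gt t ρ with htρ | hρt
  · have hsize : ∀ z, t ≤ dist z x → ‖K x z‖ ≤ t ^ (-d) := fun z hz ↦ by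
      have hxz : x ≠ z := by rintro rfl; simp at hz; linarith
      refine (hK.bound x z hxz).trans ?_
      rw [dist_comm]
      exact Real.rpow_le_rpow_of_nonpos ht hz (by linarith)
    have ht_rpow : t ^ (-d) = t ^ α / t ^ (d + α) := by rw [← Real.rpow_sub ht]; ring_nf
    calc ‖K x y - K x y'‖ ≤ ‖K x y‖ + ‖K x y'‖ := norm_sub_le _ _
      _ ≤ 2 * t ^ (-d) := by linarith [hsize y hy, hsize y' hy']
      _ = 2 * t ^ α / t ^ (d + α) := by rw [ht_rpow, mul_div_assoc]
      _ ≤ 2 * ρ ^ α / t ^ (d + α) := by gcongr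
  · have hρ : 0 ≤ ρ := le_trans (by positivity) hyy'
    have hbound_nonneg : 0 ≤ ρ ^ α / t ^ (d + α) :=
      div_nonneg (Real.rpow_nonneg hρ _) (Real.rpow_nonneg ht.le _)
    rcases eq_or_ne y y' with rfl | hne
    · rw [sub_self, norm_zero, mul_div_assoc]
      positivity
    have hsmooth := hK.smooth y y' x (dist_pos.2 hne) (by linarith)
    calc ‖K x y - K x y'‖ ≤ dist y y' ^ α / dist y x ^ (d + α) := by
          linarith [norm_nonneg (K y x - K y' x)]
      _ ≤ ρ ^ α / t ^ (d + α) := by gcongr; linarith [dist_nonneg (x := y) (y := y')]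
      _ ≤ 2 * ρ ^ α / t ^ (d + α) := by
          rw [mul_div_assoc]; exact le_mul_of_one_le_left hbound_nonneg one_le_two

lemma IsCZKernel.norm_sub_center_le_of_good {N : ℕ} {d α : ℝ} {K : RN N → RN N → ℂ}
    (hK : IsCZKernel d α K) (hd : 0 ≤ d) (hα : 0 < α) {cQ cR : RN N} {lQ lR : ℝ} (hlQ : 0 < lQ)
    (hlQR : lQ ≤ lR) (hlQt : lQ ≤ sDist (cube cQ lQ) (cube cR lR))
    (hgood : 1 / 2 * lQ ^ (α / (2 * (α + d))) * lR ^ (1 - α / (2 * (α + d))) ≤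
      sDist (cube cQ lQ) (cube cR lR))
    {x y : RN N} (hx : x ∈ cube cR lR) (hy : y ∈ cube cQ lQ) :
    ‖K x y - K x cQ‖ ≤ 2 * √N ^ α * 6 ^ (d + α) * (lQ ^ (α / 2) * lR ^ (α / 2) /
      (lQ + sDist (cube cQ lQ) (cube cR lR) + lR) ^ (d + α)) := by
  set t := sDist (cube cQ lQ) (cube cR lR)
  calc ‖K x y - K x cQ‖ ≤ 2 * (√N * lQ) ^ α / t ^ (d + α) :=
        hK.norm_sub_le_of_le_dist hd hα.le (hlQ.trans_le hlQt) (sDist_le_dist hy hx)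
          (sDist_le_dist (mem_cube_self cQ hlQ) hx) (two_mul_dist_le_of_mem_cube hlQ.le hy)
    _ = 2 * √N ^ α * (lQ ^ α / t ^ (d + α)) := by
        rw [Real.mul_rpow (Real.sqrt_nonneg _) hlQ.le]; ring
    _ ≤ 2 * √N ^ α * (6 ^ (d + α) * (lQ ^ (α / 2) * lR ^ (α / 2) / (lQ + t + lR) ^ (d + α))) := by
        gcongr
        exact rpow_div_rpow_le_longDist hd hα hlQ hlQR hlQt hgood
    _ = _ := (mul_assoc _ _ _).symm

section Integrals

variable {X : Type*} [MeasurableSpace X] {μ : Measure X}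

lemma norm_integral_mul_le_of_forall_mem {f h : X → ℂ} {s : Set X} {M : ℝ}
    (hf : Integrable f μ) (hfs : ∀ x ∉ s, f x = 0)
    (hh : ∀ᵐ x ∂μ, x ∈ s → ‖h x‖ ≤ M) :
    ‖∫ x, f x * h x ∂μ‖ ≤ (∫ x, ‖f x‖ ∂μ) * M := by
  rw [← integral_mul_const]
  refine norm_integral_le_of_norm_le (hf.norm.mul_const M) ?_
  filter_upwards [hh] with x hx
  by_cases hxs : x ∈ s
  · rw [norm_mul]
    exact mul_le_mul_of_nonneg_left (hx hxs) (norm_nonneg _)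
  · simp [hfs x hxs]

lemma norm_integral_mul_le_of_integral_eq_zero {k g : X → ℂ} {s : Set X} {c : ℂ} {B : ℝ}
    (hk : AEStronglyMeasurable k μ) (hg : Integrable g μ) (hg0 : ∫ x, g x ∂μ = 0)
    (hgs : ∀ x ∉ s, g x = 0) (hB : ∀ x ∈ s, ‖k x - c‖ ≤ B) :
    ‖∫ x, k x * g x ∂μ‖ ≤ (∫ x, ‖g x‖ ∂μ) * B := by
  have hbound : ∀ x, ‖g x * (k x - c)‖ ≤ ‖g x‖ * B := fun x ↦ by
    by_cases hx : x ∈ s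
    · rw [norm_mul]
      exact mul_le_mul_of_nonneg_left (hB x hx) (norm_nonneg _)
    · simp [hgs x hx]
  have hint : Integrable (fun x ↦ g x * (k x - c)) μ :=
    (hg.norm.mul_const B).mono' (hg.1.mul (hk.sub aestronglyMeasurable_const))
      (.of_forall hbound)
  have hcancel : ∫ x, k x * g x ∂μ = ∫ x, g x * (k x - c) ∂μ := by
    rw [← add_zero (∫ x, g x * (k x - c) ∂μ), ← mul_zero c, ← hg0, ← integral_const_mul,
      ← integral_add hint (hg.const_mul c)]
    congr with x
    ring
  rw [hcancel]
  exact norm_integral_mul_le_of_forall_mem hg hgs (.of_forall hB)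

end Integrals

theorem matrix_coefficient_bound_good_cube_general
    (N : ℕ) (d α : ℝ) (hd0 : 0 < d) (hα : 0 < α) :
    ∃ C : ℝ, ∀ (μ : Measure (RN N)) (K : RN N → RN N → ℂ) (b₁ b₂ : RN N → ℂ),
      HasGrowth μ d → IsCZKernel d α K →
      Measurable b₁ → (∀ᵐ x ∂μ, ‖b₁ x‖ ≤ 1) →
      Measurable b₂ → (∀ᵐ x ∂μ, ‖b₂ x‖ ≤ 1) →
      ∀ (cQ cR : RN N) (lQ lR : ℝ), 0 < lQ → lQ ≤ lR →
        lQ ≤ sDist (cube cQ lQ) (cube cR lR) →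
        (1 / 2) * lQ ^ (α / (2 * (α + d))) * lR ^ (1 - α / (2 * (α + d))) ≤
          sDist (cube cQ lQ) (cube cR lR) →
      ∀ φ ψ : RN N → ℂ,
        Integrable φ μ → (∀ x, x ∉ cube cQ lQ → φ x = 0) →
        (∫ x, b₁ x * φ x ∂μ) = 0 →
        Integrable ψ μ → (∀ x, x ∉ cube cR lR → ψ x = 0) →
        ‖∫ x, ψ x * b₂ x * ∫ y, K x y * b₁ y * φ y ∂μ ∂μ‖ ≤
          C * (lQ ^ (α / 2) * lR ^ (α / 2) /
              (lQ + sDist (cube cQ lQ) (cube cR lR) + lR) ^ (d + α)) *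
            (∫ x, ‖ψ x‖ ∂μ) * (∫ x, ‖φ x‖ ∂μ) := by
  refine ⟨2 * √N ^ α * 6 ^ (d + α), ?_⟩
  intro μ K b₁ b₂ _ hK hb₁m hb₁ _ hb₂ cQ cR lQ lR hlQ hlQR hlQt hgood φ ψ hφ hφQ hφ0 hψ hψR
  set t := sDist (cube cQ lQ) (cube cR lR)
  have ht : 0 < t := hlQ.trans_le hlQt
  set B := 2 * √N ^ α * 6 ^ (d + α) * (lQ ^ (α / 2) * lR ^ (α / 2) / (lQ + t + lR) ^ (d + α))
  have hB0 : 0 ≤ B := by have := hlQ.trans_le hlQR; positivity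
  have hkernel : ∀ x ∈ cube cR lR, ∀ y ∈ cube cQ lQ, ‖K x y - K x cQ‖ ≤ B := fun x hx y hy ↦
    hK.norm_sub_center_le_of_good hd0.le hα hlQ hlQR hlQt hgood hx hy
  have hinner : ∀ x ∈ cube cR lR, ‖∫ y, K x y * (b₁ y * φ y) ∂μ‖ ≤ (∫ y, ‖φ y‖ ∂μ) * B := by
    intro x hx
    have hb₁φ : Integrable (fun y ↦ b₁ y * φ y) μ := hφ.bdd_mul hb₁m.aestronglyMeasurable hb₁
    calc ‖∫ y, K x y * (b₁ y * φ y) ∂μ‖ ≤ (∫ y, ‖b₁ y * φ y‖ ∂μ) * B :=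
          norm_integral_mul_le_of_integral_eq_zero
            (hK.meas.comp measurable_prodMk_left).aestronglyMeasurable hb₁φ hφ0
            (fun y hy ↦ by rw [hφQ y hy, mul_zero]) (hkernel x hx)
      _ ≤ (∫ y, ‖φ y‖ ∂μ) * B := by
          refine mul_le_mul_of_nonneg_right (integral_mono_ae hb₁φ.norm hφ.norm ?_) hB0
          filter_upwards [hb₁] with y hy
          rw [norm_mul]
          exact mul_le_of_le_one_left (norm_nonneg _) hy
  calc ‖∫ x, ψ x * b₂ x * ∫ y, K x y * b₁ y * φ y ∂μ ∂μ‖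
      = ‖∫ x, ψ x * (b₂ x * ∫ y, K x y * (b₁ y * φ y) ∂μ) ∂μ‖ := by simp only [mul_assoc]
    _ ≤ (∫ x, ‖ψ x‖ ∂μ) * ((∫ y, ‖φ y‖ ∂μ) * B) := by
        refine norm_integral_mul_le_of_forall_mem hψ hψR ?_
        filter_upwards [hb₂] with x hx hxR
        rw [norm_mul]
        exact (mul_le_of_le_one_left (norm_nonneg _) hx).trans (hinner x hxR)
    _ = B * (∫ x, ‖ψ x‖ ∂μ) * (∫ x, ‖φ x‖ ∂μ) := by ring

/-- **Improved matrix coefficient bound for a good smaller cube** (NTV Lemma 6.4),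
with the long distance `D(Q,R) = ℓ(Q) + dist(Q,R) + ℓ(R)` and `γ = α/(2(α+d))`. -/
theorem matrix_coefficient_bound_good_cube
    (N : ℕ) (hN : 0 < N) (d α : ℝ) (hd0 : 0 < d) (hdN : d ≤ N) (hα : 0 < α) :
    ∃ C : ℝ, ∀ (μ : Measure (RN N)) (K : RN N → RN N → ℂ) (b₁ b₂ : RN N → ℂ),
      HasGrowth μ d → IsCZKernel d α K →
      Measurable b₁ → (∀ᵐ x ∂μ, ‖b₁ x‖ ≤ 1) →
      Measurable b₂ → (∀ᵐ x ∂μ, ‖b₂ x‖ ≤ 1) →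
      ∀ (cQ cR : RN N) (lQ lR : ℝ), 0 < lQ → lQ ≤ lR →
        lQ ≤ sDist (cube cQ lQ) (cube cR lR) →
        (1 / 2) * lQ ^ (α / (2 * (α + d))) * lR ^ (1 - α / (2 * (α + d))) ≤
          sDist (cube cQ lQ) (cube cR lR) →
      ∀ φ ψ : RN N → ℂ,
        Integrable φ μ → (∀ x, x ∉ cube cQ lQ → φ x = 0) →
        (∫ x, b₁ x * φ x ∂μ) = 0 →
        Integrable ψ μ → (∀ x, x ∉ cube cR lR → ψ x = 0) →
        ‖∫ x, ψ x * b₂ x * ∫ y, K x y * b₁ y * φ y ∂μ ∂μ‖ ≤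
          C * (lQ ^ (α / 2) * lR ^ (α / 2) /
              (lQ + sDist (cube cQ lQ) (cube cR lR) + lR) ^ (d + α)) *
            (∫ x, ‖ψ x‖ ∂μ) * (∫ x, ‖φ x‖ ∂μ) :=
  matrix_coefficient_bound_good_cube_general N d α hd0 hα
end
end
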